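/- arXiv:2011.08938 — 7 statements merged into one kernel-verified Lean document; each statement's English description precedes it below -/
import Mathlib

section
/- For all integers m, n ≥ 1, the determinant of the adjacency matrix of the complete bridge graph B_{m,n} equals (−1)^{m+n−1}·(3−(m+n)). -/
/-- The complete bridge graph `B_{m,n}` on vertex set `Fin (m+n)` (0-indexed version of the
paper's `{1, …, m+n}`): vertices `0, …, m-1` form a complete graph `K_m`, vertices
`m, …, m+n-1` form a complete graph `K_n`, and the only further edge is the bridge joining
vertex `m-1` (the paper's vertex `m`) to vertex `m` (the paper's vertex `m+1`). -/
def bridgeGraph (m n : ℕ) : SimpleGraph (Fin (m + n)) :=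
  SimpleGraph.fromRel (fun i j =>
    ((i : ℕ) < m ∧ (j : ℕ) < m) ∨ (m ≤ (i : ℕ) ∧ m ≤ (j : ℕ)) ∨
      ((i : ℕ) + 1 = m ∧ (j : ℕ) = m))

instance (m n : ℕ) : DecidableRel (bridgeGraph m n).Adj := fun i j =>
  decidable_of_iff (i ≠ j ∧
      ((((i : ℕ) < m ∧ (j : ℕ) < m) ∨ (m ≤ (i : ℕ) ∧ m ≤ (j : ℕ)) ∨
        ((i : ℕ) + 1 = m ∧ (j : ℕ) = m)) ∨
       (((j : ℕ) < m ∧ (i : ℕ) < m) ∨ (m ≤ (j : ℕ) ∧ m ≤ (i : ℕ)) ∨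
        ((j : ℕ) + 1 = m ∧ (i : ℕ) = m)))) Iff.rfl

/-!
With `A` the adjacency matrix, `A + 1 = UᵀV` for two `4 × (m + n)` matrices whose rows are the
indicator vectors of the two cliques and of the two ends of the bridge (the latter two swapped
in `V`). By the Weinstein–Aronszajn identity `det (1 - UᵀV) = det (1 - VUᵀ)`, so
`det A = (-1)^(m+n) det (1 - VUᵀ)`, a `4 × 4` determinant equal to `m + n - 3`.
-/

open Matrix Finset

variable {R : Type*}

variable (R) in
def intervalIndicator [Zero R] [One R] (N a b : ℕ) : Fin N → R :=
  fun i => if a ≤ (i : ℕ) ∧ (i : ℕ) < b then 1 else 0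

-- The subtraction is in `ℕ`, so disjoint intervals give `0`.
theorem intervalIndicator_dotProduct [NonAssocSemiring R] (N a b c d : ℕ) :
    intervalIndicator R N a b ⬝ᵥ intervalIndicator R N c d =
      ((min (min b d) N - max a c : ℕ) : R) := by
  simp only [dotProduct, intervalIndicator, ite_zero_mul_ite_zero, mul_one]
  rw [Fin.sum_univ_eq_sum_range (fun i => if (a ≤ i ∧ i < b) ∧ c ≤ i ∧ i < d then (1 : R) else 0),
    sum_boole, ← Nat.card_Ico]
  congr 2
  ext i
  simp only [mem_filter, mem_range, mem_Ico]
  omega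

theorem Matrix.of_mul_transpose_of {ι κ : Type*} [Fintype κ] [Mul R] [AddCommMonoid R]
    (u v : ι → κ → R) : of u * (of v)ᵀ = of fun k l => u k ⬝ᵥ v l :=
  rfl

theorem Matrix.det_mul_sub_one_comm {ι κ : Type*} [Fintype ι] [DecidableEq ι] [Fintype κ]
    [DecidableEq κ] [CommRing R] (A : Matrix ι κ R) (B : Matrix κ ι R) :
    det (A * B - 1) = (-1) ^ Fintype.card ι * det (1 - B * A) := by
  rw [← neg_sub, det_neg, det_one_sub_mul_comm]

variable (R) in
def bridgeLeft [Zero R] [One R] (m n : ℕ) : Matrix (Fin 4) (Fin (m + n)) R :=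
  of ![intervalIndicator R _ 0 m, intervalIndicator R _ m (m + n),
    intervalIndicator R _ (m - 1) m, intervalIndicator R _ m (m + 1)]

variable (R) in
def bridgeRight [Zero R] [One R] (m n : ℕ) : Matrix (Fin 4) (Fin (m + n)) R :=
  of ![intervalIndicator R _ 0 m, intervalIndicator R _ m (m + n),
    intervalIndicator R _ m (m + 1), intervalIndicator R _ (m - 1) m]

theorem adjMatrix_bridgeGraph_add_one [NonAssocSemiring R] (m n : ℕ) :
    (bridgeGraph m n).adjMatrix R + 1 = (bridgeLeft R m n)ᵀ * bridgeRight R m n := by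
  ext i j
  rw [Matrix.add_apply, SimpleGraph.adjMatrix_apply]
  simp only [one_apply, mul_apply, transpose_apply, Fin.sum_univ_four, bridgeLeft, bridgeRight,
    of_apply, Matrix.cons_val, intervalIndicator, bridgeGraph, SimpleGraph.fromRel_adj,
    Fin.ext_iff, ite_zero_mul_ite_zero, mul_one]
  split_ifs <;> first | omega | norm_num

def bridgeGram [Zero R] [One R] (a b : R) : Matrix (Fin 4) (Fin 4) R :=
  !![a, 0, 1, 0; 0, b, 0, 1; 0, 1, 0, 1; 1, 0, 1, 0]

theorem bridgeRight_mul_transpose_bridgeLeft [NonAssocRing R] {m n : ℕ} (hm : 1 ≤ m)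
    (hn : 1 ≤ n) :
    bridgeRight R m n * (bridgeLeft R m n)ᵀ = bridgeGram (m : R) n := by
  rw [bridgeRight, bridgeLeft, bridgeGram, of_mul_transpose_of]
  ext k l
  fin_cases k <;> fin_cases l <;>
    simp [intervalIndicator_dotProduct, min_eq_left hn, min_eq_right hn, Nat.cast_pred hm]

theorem det_one_sub_bridgeGram [CommRing R] (a b : R) : det (1 - bridgeGram a b) = a + b - 3 := by
  simp [bridgeGram, det_succ_row_zero, Fin.sum_univ_succ, Fin.succAbove, one_apply]
  ring

theorem det_adjMatrix_bridgeGraph' [CommRing R] {m n : ℕ} (hm : 1 ≤ m) (hn : 1 ≤ n) :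
    det ((bridgeGraph m n).adjMatrix R) = (-1) ^ (m + n) * (m + n - 3) := by
  rw [eq_sub_of_add_eq (adjMatrix_bridgeGraph_add_one (R := R) m n), det_mul_sub_one_comm,
    bridgeRight_mul_transpose_bridgeLeft hm hn, det_one_sub_bridgeGram, Fintype.card_fin]

/-- For all integers `m, n ≥ 1`, the determinant of the adjacency matrix of
the complete bridge graph `B_{m,n}` equals `(−1)^(m+n−1) · (3 − (m+n))`. -/
theorem det_adjMatrix_bridgeGraph (m n : ℕ) (hm : 1 ≤ m) (hn : 1 ≤ n) :
    ((bridgeGraph m n).adjMatrix ℝ).det = (-1) ^ (m + n - 1) * (3 - ((m : ℝ) + (n : ℝ))) := by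
  have hN : m + n = (m + n - 1) + 1 := by omega
  rw [det_adjMatrix_bridgeGraph' hm hn, hN, pow_succ, Nat.add_sub_cancel]
  ring
end

section
/- For all integers m ≥ n ≥ 1 with m + n ≠ 4, the determinant of the adjacency matrix of the complement of B_{m,n} is 0; moreover, the determinant of the adjacency matrix of the complement of B_{2,2} is 1. -/
/-!
If `n = 1`, the bridge endpoint of `K_m` is adjacent to every other vertex of `B_{m,1}`, so it is
isolated in the complement and the adjacency matrix has a zero row. Otherwise `m ≥ 3`, and two
vertices of `K_m` away from the bridge are non-adjacent twins in the complement (both are adjacent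
exactly to `K_n`), so the adjacency matrix has two equal rows. The complement of `B_{2,2}` is the
path `P_4`, whose adjacency determinant is `1`.
-/

namespace SimpleGraph

variable {V R : Type*} [Fintype V] [DecidableEq V] [CommRing R] (G : SimpleGraph V)
  [DecidableRel G.Adj]

theorem det_adjMatrix_eq_zero_of_forall_not_adj {v : V} (hv : ∀ w, ¬G.Adj v w) :
    (G.adjMatrix R).det = 0 :=
  Matrix.det_eq_zero_of_row_eq_zero v fun w => by simp [hv w]

theorem det_adjMatrix_eq_zero_of_adj_iff {v w : V} (hvw : v ≠ w)
    (h : ∀ u, G.Adj v u ↔ G.Adj w u) : (G.adjMatrix R).det = 0 :=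
  Matrix.det_zero_of_row_eq hvw <| funext fun u => by simp [h u]

end SimpleGraph

theorem bridgeGraph_adj_iff (m n : ℕ) (i j : Fin (m + n)) :
    (bridgeGraph m n).Adj i j ↔ i ≠ j ∧
      (((i : ℕ) < m ∧ (j : ℕ) < m) ∨ (m ≤ (i : ℕ) ∧ m ≤ (j : ℕ)) ∨
        ((i : ℕ) + 1 = m ∧ (j : ℕ) = m) ∨ ((j : ℕ) + 1 = m ∧ (i : ℕ) = m)) := by
  simp only [bridgeGraph, SimpleGraph.fromRel_adj]
  constructor <;> rintro ⟨hij, hrel⟩ <;> exact ⟨hij, by omega⟩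

theorem bridgeGraph_one_adj_of_ne {m : ℕ} (hm : 1 ≤ m) (w : Fin (m + 1))
    (hw : w ≠ ⟨m - 1, by omega⟩) : (bridgeGraph m 1).Adj ⟨m - 1, by omega⟩ w := by
  refine (bridgeGraph_adj_iff m 1 _ w).2 ⟨hw.symm, ?_⟩
  have := w.isLt
  simp only [ne_eq, Fin.ext_iff] at hw ⊢
  omega

theorem compl_bridgeGraph_adj_zero_iff_one {m n : ℕ} (hm : 3 ≤ m) (u : Fin (m + n)) :
    (bridgeGraph m n)ᶜ.Adj ⟨0, by omega⟩ u ↔ (bridgeGraph m n)ᶜ.Adj ⟨1, by omega⟩ u := by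
  simp only [SimpleGraph.compl_adj, bridgeGraph_adj_iff, ne_eq, Fin.ext_iff]
  omega

theorem adjMatrix_compl_bridgeGraph_two_two (R : Type*) [CommRing R] :
    ((bridgeGraph 2 2)ᶜ).adjMatrix R = !![0, 0, 1, 1; 0, 0, 0, 1; 1, 0, 0, 0; 1, 1, 0, 0] := by
  ext i j
  fin_cases i <;> fin_cases j <;> simp [SimpleGraph.adjMatrix_apply, bridgeGraph_adj_iff]

theorem det_adjMatrix_compl_bridgeGraph_two_two (R : Type*) [CommRing R] :
    (((bridgeGraph 2 2)ᶜ).adjMatrix R).det = 1 := by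
  rw [adjMatrix_compl_bridgeGraph_two_two]
  simp [Matrix.det_succ_row_zero, Fin.sum_univ_succ, Fin.succAbove]

/-- For all integers `m ≥ n ≥ 1` with `m + n ≠ 4`, the determinant of the
adjacency matrix of the complement of `B_{m,n}` is `0`; moreover, the determinant of the
adjacency matrix of the complement of `B_{2,2}` is `1`. -/
theorem det_adjMatrix_compl_bridgeGraph :
    (∀ m n : ℕ, 1 ≤ n → n ≤ m → m + n ≠ 4 →
      (((bridgeGraph m n)ᶜ).adjMatrix ℝ).det = 0) ∧
    (((bridgeGraph 2 2)ᶜ).adjMatrix ℝ).det = 1 := by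
  refine ⟨fun m n hn hnm hne => ?_, det_adjMatrix_compl_bridgeGraph_two_two ℝ⟩
  obtain rfl | hn := hn.eq_or_lt
  · exact SimpleGraph.det_adjMatrix_eq_zero_of_forall_not_adj _ (v := ⟨m - 1, by omega⟩)
      fun w hadj => hadj.2 (bridgeGraph_one_adj_of_ne hnm w hadj.1.symm)
  · exact SimpleGraph.det_adjMatrix_eq_zero_of_adj_iff _ (by simp [Fin.ext_iff])
      (compl_bridgeGraph_adj_zero_iff_one (by omega))
end

section
/- For all integers m ≥ n ≥ 2, the determinant of the adjacency matrix of the suspension graph S(m,n) equals (−1)^{m+n}·(4mn − 5(m+n) + 6). -/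
/-- The suspension graph `S(m,n)`: the complete bridge graph `B_{m,n}` (on the vertices with
value `< m + n`) together with one new vertex (the vertex with value `m + n`) joined to every
vertex of `B_{m,n}` except the two bridge vertices (the paper's vertices `m` and `m+1`, i.e.
the Lean vertices with values `m-1` and `m`). -/
def suspGraph (m n : ℕ) : SimpleGraph (Fin (m + n + 1)) :=
  SimpleGraph.fromRel (fun i j =>
    ((i : ℕ) < m + n ∧ (j : ℕ) < m + n ∧
      (((i : ℕ) < m ∧ (j : ℕ) < m) ∨ (m ≤ (i : ℕ) ∧ m ≤ (j : ℕ)) ∨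
        ((i : ℕ) + 1 = m ∧ (j : ℕ) = m))) ∨
    ((i : ℕ) = m + n ∧ (j : ℕ) < m + n ∧ (j : ℕ) + 1 ≠ m ∧ (j : ℕ) ≠ m))

instance (m n : ℕ) : DecidableRel (suspGraph m n).Adj := fun i j =>
  decidable_of_iff (i ≠ j ∧
    ((((i : ℕ) < m + n ∧ (j : ℕ) < m + n ∧
      (((i : ℕ) < m ∧ (j : ℕ) < m) ∨ (m ≤ (i : ℕ) ∧ m ≤ (j : ℕ)) ∨
        ((i : ℕ) + 1 = m ∧ (j : ℕ) = m))) ∨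
     ((i : ℕ) = m + n ∧ (j : ℕ) < m + n ∧ (j : ℕ) + 1 ≠ m ∧ (j : ℕ) ≠ m)) ∨
     (((j : ℕ) < m + n ∧ (i : ℕ) < m + n ∧
      (((j : ℕ) < m ∧ (i : ℕ) < m) ∨ (m ≤ (j : ℕ) ∧ m ≤ (i : ℕ)) ∨
        ((j : ℕ) + 1 = m ∧ (i : ℕ) = m))) ∨
     ((j : ℕ) = m + n ∧ (i : ℕ) < m + n ∧ (i : ℕ) + 1 ≠ m ∧ (i : ℕ) ≠ m)))) Iff.rfl

/-!
`S(m,n)` is a blow-up of the 5-cycle: replace its vertices, in cyclic order, by cliques of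
sizes `m - 1, 1, 1, n - 1, 1` (the rest of `K_m`, the two bridge vertices, the rest of `K_n`,
the apex) and join the cliques of adjacent vertices completely. With `U` the membership matrix
of this partition, `A + 1 = U (1 + A(C₅)) Uᵀ` and `Uᵀ U = D` is the diagonal of clique sizes,
so Sylvester's identity `det (1 - X Y) = det (1 - Y X)` gives
`det A = (-1) ^ (m + n + 1) * det (1 - (1 + A(C₅)) D)`, a `5 × 5` determinant.
-/

open Matrix Finset SimpleGraph

theorem Matrix.submatrix_eq_mul_mul_transpose {R V ι : Type*} [NonAssocSemiring R] [Fintype ι]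
    [DecidableEq ι] (Q : Matrix ι ι R) (f : V → ι) :
    Q.submatrix f f =
      (1 : Matrix ι ι R).submatrix f id * Q * ((1 : Matrix ι ι R).submatrix f id)ᵀ := by
  ext u v
  simp [mul_apply, one_apply]

theorem Matrix.transpose_mul_self_one_submatrix {R V ι : Type*} [NonAssocSemiring R] [Fintype V]
    [DecidableEq ι] (f : V → ι) :
    ((1 : Matrix ι ι R).submatrix f id)ᵀ * (1 : Matrix ι ι R).submatrix f id =
      diagonal fun i => (#{v | f v = i} : R) := by
  ext i j
  rcases eq_or_ne i j with rfl | hij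
  · simp +contextual [mul_apply, one_apply, eq_comm (a := i), Finset.sum_boole]
  · rw [diagonal_apply_ne _ hij, mul_apply]
    refine Finset.sum_eq_zero fun v _ => ?_
    by_cases hv : f v = i <;> simp [one_apply, hv, hij]

theorem Matrix.det_submatrix_sub_one {R V ι : Type*} [CommRing R] [Fintype V] [DecidableEq V]
    [Fintype ι] [DecidableEq ι] (Q : Matrix ι ι R) (f : V → ι) :
    (Q.submatrix f f - 1).det =
      (-1) ^ Fintype.card V * (1 - Q * diagonal fun i => (#{v | f v = i} : R)).det := by
  rw [Q.submatrix_eq_mul_mul_transpose f, ← neg_sub, det_neg, Matrix.mul_assoc,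
    det_one_sub_mul_comm, Matrix.mul_assoc, transpose_mul_self_one_submatrix]

theorem SimpleGraph.adjMatrix_eq_submatrix_sub_one {R V ι : Type*} [AddGroupWithOne R] [DecidableEq V]
    [DecidableEq ι] {G : SimpleGraph V} [DecidableRel G.Adj] {H : SimpleGraph ι}
    [DecidableRel H.Adj] (f : V → ι)
    (hG : ∀ u v, G.Adj u v ↔ u ≠ v ∧ (f u = f v ∨ H.Adj (f u) (f v))) :
    G.adjMatrix R = (1 + H.adjMatrix R).submatrix f f - 1 := by
  ext u v
  rcases eq_or_ne u v with rfl | huv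
  · simp
  · by_cases hf : f u = f v
    · simp [hG, huv, hf]
    · simp [hG, huv, hf, one_apply]

theorem one_add_adjMatrix_cycleGraph_five {R : Type*} [AddMonoidWithOne R] :
    1 + (cycleGraph 5).adjMatrix R =
      !![1, 1, 0, 0, 1; 1, 1, 1, 0, 0; 0, 1, 1, 1, 0; 0, 0, 1, 1, 1; 1, 0, 0, 1, 1] := by
  ext i j
  fin_cases i <;> fin_cases j <;> simp +decide [one_apply, adjMatrix_apply]

theorem det_one_sub_one_add_adjMatrix_cycleGraph_five_mul_diagonal {R : Type*} [CommRing R]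
    (a b : R) :
    (1 - (1 + (cycleGraph 5).adjMatrix R) * diagonal ![a, 1, 1, b, 1]).det =
      a + b - 4 * a * b := by
  have explicit : 1 - (1 + (cycleGraph 5).adjMatrix R) * diagonal ![a, 1, 1, b, 1] =
      !![1 - a, -1, 0, 0, -1; -a, 0, -1, 0, 0; 0, -1, 0, -b, 0; 0, 0, -1, 1 - b, -1;
        -a, 0, 0, -b, 0] := by
    rw [one_add_adjMatrix_cycleGraph_five]
    ext i j
    fin_cases i <;> fin_cases j <;> simp [one_apply, vecMul, dotProduct, Fin.sum_univ_five]
  rw [explicit]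
  simp +decide [det_succ_row_zero, Fin.sum_univ_succ, Fin.succAbove]
  ring

theorem Fin.card_filter_le_and_lt {N a b : ℕ} (hb : b ≤ N) :
    #{i : Fin N | a ≤ (i : ℕ) ∧ (i : ℕ) < b} = b - a := by
  rw [← card_map Fin.valEmbedding, map_filter', map_valEmbedding_univ, ← Nat.card_Ico]
  congr 1
  ext i
  simp [Fin.exists_iff]
  omega

/-- The vertex of `C₅` whose clique contains `v`, in the blow-up description of `S(m,n)`. -/
def suspPart (m n : ℕ) (v : Fin (m + n + 1)) : Fin 5 :=
  if (v : ℕ) + 1 < m then 0 else if (v : ℕ) + 1 = m then 1 else if (v : ℕ) = m then 2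
  else if (v : ℕ) < m + n then 3 else 4

theorem suspGraph_adj_iff {m n : ℕ} (hn : 1 ≤ n) (u v : Fin (m + n + 1)) :
    (suspGraph m n).Adj u v ↔
      u ≠ v ∧ (suspPart m n u = suspPart m n v ∨
        (cycleGraph 5).Adj (suspPart m n u) (suspPart m n v)) := by
  have hu := u.isLt
  have hv := v.isLt
  simp only [suspGraph, fromRel_adj, suspPart, Fin.ext_iff]
  split_ifs <;> simp +decide <;> omega

theorem card_suspPart_fiber {m n : ℕ} (hm : 1 ≤ m) (hn : 1 ≤ n) (k : Fin 5) :
    (#{v | suspPart m n v = k} : ℝ) = ![(m : ℝ) - 1, 1, 1, (n : ℝ) - 1, 1] k := by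
  have card_eq (a b : ℕ) (hab : a ≤ b) (hb : b ≤ m + n + 1)
      (hk : ∀ v, suspPart m n v = k ↔ a ≤ (v : ℕ) ∧ (v : ℕ) < b) :
      (#{v | suspPart m n v = k} : ℝ) = b - a := by
    simp_rw [hk, Fin.card_filter_le_and_lt hb, Nat.cast_sub hab]
  fin_cases k
  · rw [card_eq 0 (m - 1) (by omega) (by omega) fun v => by simp [suspPart]; split_ifs <;> omega]
    push_cast [hm]; ring
  · rw [card_eq (m - 1) m (by omega) (by omega) fun v => by simp [suspPart]; split_ifs <;> omega]
    push_cast [hm]; ring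
  · rw [card_eq m (m + 1) (by omega) (by omega) fun v => by simp [suspPart]; split_ifs <;> omega]
    simp
  · rw [card_eq (m + 1) (m + n) (by omega) (by omega)
      fun v => by simp [suspPart]; split_ifs <;> omega]
    push_cast [hn]; ring
  · rw [card_eq (m + n) (m + n + 1) (by omega) le_rfl
      fun v => by simp [suspPart]; split_ifs <;> omega]
    simp

/-- For all integers `m ≥ n ≥ 2`, the determinant of the adjacency matrix of
the suspension graph `S(m,n)` equals `(−1)^(m+n) · (4mn − 5(m+n) + 6)`. -/
theorem det_adjMatrix_suspGraph (m n : ℕ) (hn : 2 ≤ n) (hnm : n ≤ m) :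
    ((suspGraph m n).adjMatrix ℝ).det =
      (-1) ^ (m + n) * (4 * (m : ℝ) * (n : ℝ) - 5 * ((m : ℝ) + (n : ℝ)) + 6) := by
  have hn₁ : 1 ≤ n := by omega
  have hm₁ : 1 ≤ m := by omega
  have sizes : (diagonal fun k => (#{v | suspPart m n v = k} : ℝ)) =
      diagonal ![(m : ℝ) - 1, 1, 1, (n : ℝ) - 1, 1] :=
    congrArg diagonal (funext (card_suspPart_fiber hm₁ hn₁))
  rw [adjMatrix_eq_submatrix_sub_one (suspPart m n) (suspGraph_adj_iff hn₁),
    det_submatrix_sub_one, sizes, det_one_sub_one_add_adjMatrix_cycleGraph_five_mul_diagonal,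
    Fintype.card_fin, pow_succ]
  ring
end

section
/- For all integers m ≥ n ≥ 2 with m + n > 4, the number −1 is an eigenvalue of the adjacency matrix A(B_{m,n}) with multiplicity exactly m + n − 4; equivalently, the rank of the matrix I + A(B_{m,n}) equals 4. -/
/-!
The rows of `I + A(B_{m,n})` take only four values: that of a vertex of `K_m` other than `m`,
of the two ends `m`, `m + 1` of the bridge, and of a vertex of `K_n` other than `m + 1`. Taking
one vertex of each kind, the rows `1, m, m + 1, m + n` span the row space and the corresponding
principal minor is `I + A(P₄)`, of determinant `-1`; hence `rank (I + A) = 4`. As `A` is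
symmetric, the multiplicity of `-1` as a root of its characteristic polynomial is the nullity
`m + n - 4` of `A + I`.
-/

open Polynomial Module Submodule

namespace Matrix

theorem IsHermitian.rootMultiplicity_zero_charpoly {𝕜 n : Type*} [RCLike 𝕜] [Fintype n]
    [DecidableEq n] {A : Matrix n n 𝕜} (hA : A.IsHermitian) :
    A.charpoly.rootMultiplicity 0 = Fintype.card n - A.rank := by
  classical
  rw [← count_roots, hA.roots_charpoly_eq_eigenvalues, Multiset.count_map,
    hA.rank_eq_card_non_zero_eigs, ← Fintype.card_subtype_compl, Fintype.card_subtype]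
  simp [Finset.card, eq_comm (a := (0 : 𝕜))]

theorem rootMultiplicity_charpoly_eq_card_sub_rank {𝕜 n : Type*} [RCLike 𝕜] [Fintype n]
    [DecidableEq n] {A : Matrix n n 𝕜} {μ : 𝕜} (hA : (A - scalar n μ).IsHermitian) :
    A.charpoly.rootMultiplicity μ = Fintype.card n - (A - scalar n μ).rank := by
  rw [rootMultiplicity_eq_rootMultiplicity, ← charpoly_sub_scalar,
    hA.rootMultiplicity_zero_charpoly]

theorem rank_eq_card_of_det_submatrix_ne_zero {K m n ι : Type*} [Field K] [Fintype m]
    [Fintype n] [Fintype ι] [DecidableEq ι] (A : Matrix m n K) (r : ι → m) (c : ι → n)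
    (hspan : ∀ i, A i ∈ span K (Set.range fun k => A (r k)))
    (hdet : (A.submatrix r c).det ≠ 0) :
    A.rank = Fintype.card ι := by
  refine le_antisymm ?_ ?_
  · calc A.rank = finrank K (span K (Set.range A.row)) := A.rank_eq_finrank_span_row
      _ ≤ finrank K (span K (Set.range fun k => A (r k))) :=
        finrank_mono (span_le.2 (Set.range_subset_iff.2 hspan))
      _ ≤ Fintype.card ι := finrank_range_le_card _
  · calc Fintype.card ι = (A.submatrix r c).rank :=
          ((A.submatrix r c).rank_of_isUnit ((isUnit_iff_isUnit_det _).2 hdet.isUnit)).symm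
      _ ≤ A.rank := A.rank_submatrix_le r c

end Matrix

namespace SimpleGraph

variable {V R : Type*} [DecidableEq V] (G : SimpleGraph V) [DecidableRel G.Adj]

theorem one_add_adjMatrix_apply [Semiring R] (i j : V) :
    (1 + G.adjMatrix R) i j = if i = j ∨ G.Adj i j then 1 else 0 := by
  by_cases h : i = j
  · subst h; simp
  · simp [Matrix.one_apply_ne h, h]

theorem one_add_adjMatrix_row_eq [Semiring R] {i i' : V}
    (h : ∀ j, i = j ∨ G.Adj i j ↔ i' = j ∨ G.Adj i' j) :
    (1 + G.adjMatrix R) i = (1 + G.adjMatrix R) i' := by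
  funext j
  simp only [one_add_adjMatrix_apply, h j]

theorem isHermitian_one_add_adjMatrix [CommRing R] [StarRing R] [TrivialStar R] :
    (1 + G.adjMatrix R).IsHermitian :=
  Matrix.isHermitian_one.add (Matrix.isHermitian_iff_isSymm.2 G.isSymm_adjMatrix)

end SimpleGraph

theorem eq_or_bridgeGraph_adj_iff {m n : ℕ} (i j : Fin (m + n)) :
    i = j ∨ (bridgeGraph m n).Adj i j ↔
      ((i : ℕ) < m ∧ (j : ℕ) < m) ∨ (m ≤ (i : ℕ) ∧ m ≤ (j : ℕ)) ∨
        ((i : ℕ) + 1 = m ∧ (j : ℕ) = m) ∨ ((j : ℕ) + 1 = m ∧ (i : ℕ) = m) := by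
  simp only [bridgeGraph, SimpleGraph.fromRel_adj, ne_eq, Fin.ext_iff]
  omega

theorem rank_one_add_adjMatrix_bridgeGraph {m n : ℕ} (hm : 2 ≤ m) (hn : 2 ≤ n) :
    (1 + (bridgeGraph m n).adjMatrix ℝ).rank = 4 := by
  -- the vertices `0, m - 1, m, m + n - 1` are known to the proof only through their values,
  -- which is all `omega` needs
  obtain ⟨r, hr0, hr1, hr2, hr3⟩ : ∃ r : Fin 4 → Fin (m + n), (r 0 : ℕ) = 0 ∧
      (r 1 : ℕ) = m - 1 ∧ (r 2 : ℕ) = m ∧ (r 3 : ℕ) = m + n - 1 :=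
    ⟨![⟨0, by omega⟩, ⟨m - 1, by omega⟩, ⟨m, by omega⟩, ⟨m + n - 1, by omega⟩],
      rfl, rfl, rfl, rfl⟩
  have hrepr : ∀ i, ∃ k, ∀ j,
      i = j ∨ (bridgeGraph m n).Adj i j ↔ r k = j ∨ (bridgeGraph m n).Adj (r k) j := by
    intro i
    simp only [eq_or_bridgeGraph_adj_iff]
    rcases (show (i : ℕ) + 1 < m ∨ (i : ℕ) + 1 = m ∨ (i : ℕ) = m ∨ m < i by omega)
      with h | h | h | h
    · exact ⟨0, fun j => by omega⟩
    · exact ⟨1, fun j => by omega⟩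
    · exact ⟨2, fun j => by omega⟩
    · exact ⟨3, fun j => by omega⟩
  have hminor : (1 + (bridgeGraph m n).adjMatrix ℝ).submatrix r r =
      !![1, 1, 0, 0; 1, 1, 1, 0; 0, 1, 1, 1; 0, 0, 1, 1] := by
    ext i j
    rw [Matrix.submatrix_apply, SimpleGraph.one_add_adjMatrix_apply]
    fin_cases i <;> fin_cases j <;> simp [eq_or_bridgeGraph_adj_iff, hr0, hr1, hr2, hr3] <;> omega
  rw [← Fintype.card_fin 4]
  refine Matrix.rank_eq_card_of_det_submatrix_ne_zero _ r r (fun i => ?_) ?_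
  · obtain ⟨k, hk⟩ := hrepr i
    rw [(bridgeGraph m n).one_add_adjMatrix_row_eq hk]
    exact subset_span ⟨k, rfl⟩
  · rw [hminor]
    simp [Matrix.det_succ_row_zero, Fin.sum_univ_succ, Fin.succAbove]

theorem neg_one_eigenvalue_bridgeGraph_general (m n : ℕ) (hn : 2 ≤ n) (hnm : n ≤ m) :
    ((bridgeGraph m n).adjMatrix ℝ).charpoly.rootMultiplicity (-1) = m + n - 4 ∧
    (1 + (bridgeGraph m n).adjMatrix ℝ).rank = 4 := by
  have hrank := rank_one_add_adjMatrix_bridgeGraph (hn.trans hnm) hn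
  have hshift : (bridgeGraph m n).adjMatrix ℝ - Matrix.scalar _ (-1 : ℝ) =
      1 + (bridgeGraph m n).adjMatrix ℝ := by
    rw [map_neg, map_one, sub_neg_eq_add]
    exact add_comm _ _
  have hherm := (bridgeGraph m n).isHermitian_one_add_adjMatrix (R := ℝ)
  refine ⟨?_, hrank⟩
  rw [Matrix.rootMultiplicity_charpoly_eq_card_sub_rank (hshift ▸ hherm), hshift, hrank,
    Fintype.card_fin]

/-- For all integers `m ≥ n ≥ 2` with `m + n > 4`, the number `−1` is an
eigenvalue of `A(B_{m,n})` with multiplicity exactly `m + n − 4` (multiplicity as a root of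
the characteristic polynomial `det (xI − A)`); equivalently, the rank of `I + A(B_{m,n})`
equals `4`. -/
theorem neg_one_eigenvalue_bridgeGraph (m n : ℕ) (hn : 2 ≤ n) (hnm : n ≤ m)
    (h4 : 4 < m + n) :
    ((bridgeGraph m n).adjMatrix ℝ).charpoly.rootMultiplicity (-1) = m + n - 4 ∧
    (1 + (bridgeGraph m n).adjMatrix ℝ).rank = 4 :=
  neg_one_eigenvalue_bridgeGraph_general m n hn hnm
end

section
/- For all integers m ≥ n ≥ 2, the largest eigenvalue λ₁ of the adjacency matrix A(B_{m,n}) satisfies m − 1 ≤ λ₁ ≤ m; if moreover m = n, then m − (1 − 1/m) ≤ λ₁ ≤ m. -/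
/-!
The largest eigenvalue `λ₁` of a real symmetric matrix bounds its Rayleigh quotient; for
the adjacency matrix and the indicator vector of a vertex set `U`, that quotient is the
number of ordered adjacent pairs in `U` divided by `#U`. The clique `K_m` has `m (m - 1)`
such pairs, so `λ₁ ≥ m - 1`; when `m = n` the whole vertex set has `2 m (m - 1) + 2`, so
`λ₁ ≥ m - 1 + 1 / m`. By Gershgorin's theorem `λ₁` is at most the maximum degree,
which is `max m n = m`.
-/

open Finset Matrix SimpleGraph

namespace Matrix.IsHermitian

variable {ι : Type*} [Fintype ι] [DecidableEq ι] {A : Matrix ι ι ℝ}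

theorem exists_isGreatest_isRoot_charpoly [Nonempty ι] (hA : A.IsHermitian) :
    ∃ lam, IsGreatest {mu | A.charpoly.IsRoot mu} lam := by
  obtain ⟨i, hi⟩ := Finite.exists_max hA.eigenvalues
  refine ⟨hA.eigenvalues i,
    mem_spectrum_iff_isRoot_charpoly.mp (hA.eigenvalues_mem_spectrum_real i), fun mu hmu => ?_⟩
  obtain ⟨j, rfl⟩ : mu ∈ Set.range hA.eigenvalues :=
    hA.spectrum_real_eq_range_eigenvalues ▸ mem_spectrum_iff_isRoot_charpoly.mpr hmu
  exact hi j

open scoped MatrixOrder in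
theorem dotProduct_mulVec_le_of_isRoot_le (hA : A.IsHermitian) {r : ℝ}
    (hr : ∀ mu, A.charpoly.IsRoot mu → mu ≤ r) (w : ι → ℝ) :
    w ⬝ᵥ (A *ᵥ w) ≤ r * (w ⬝ᵥ w) := by
  have hle : A ≤ algebraMap ℝ _ r := le_algebraMap_of_spectrum_le
    (fun mu hmu => hr mu (mem_spectrum_iff_isRoot_charpoly.mp hmu)) hA.isSelfAdjoint
  have := (Matrix.le_iff.mp hle).dotProduct_mulVec_nonneg w
  simpa [sub_mulVec, dotProduct_sub, Algebra.algebraMap_eq_smul_one, smul_mulVec,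
    dotProduct_smul] using this

end Matrix.IsHermitian

theorem Finset.cast_card_offDiag {R : Type*} [Ring R] {α : Type*} (S : Finset α) :
    (#S.offDiag : R) = #S * (#S - 1) := by
  rw [offDiag_card, Nat.cast_sub (Nat.le_mul_self _), Nat.cast_mul, mul_sub_one]

namespace SimpleGraph

variable {V : Type*} {G : SimpleGraph V} [DecidableRel G.Adj]

theorem IsClique.offDiag_subset_interedges {S : Finset V} (hS : G.IsClique (S : Set V)) :
    S.offDiag ⊆ G.interedges S S := fun p hp => by
  obtain ⟨h1, h2, hne⟩ := mem_offDiag.mp hp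
  exact (G.mem_interedges_iff).mpr ⟨h1, h2, hS h1 h2 hne⟩

variable [DecidableEq V]

theorem card_offDiag_add_card_offDiag_add_two_le_card_interedges {S T : Finset V}
    (hST : Disjoint S T) (hS : G.IsClique (S : Set V)) (hT : G.IsClique (T : Set V))
    {s t : V} (hs : s ∈ S) (ht : t ∈ T) (hst : G.Adj s t) :
    #S.offDiag + #T.offDiag + 2 ≤ #(G.interedges (S ∪ T) (S ∪ T)) := by
  have hdisj : Disjoint S.offDiag T.offDiag := Finset.disjoint_left.mpr fun p hpS hpT =>
    Finset.disjoint_left.mp hST (mem_offDiag.mp hpS).1 (mem_offDiag.mp hpT).1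
  have hbridge : Disjoint (S.offDiag ∪ T.offDiag) {(s, t), (t, s)} := by
    have htS : t ∉ S := Finset.disjoint_right.mp hST ht
    have hsT : s ∉ T := Finset.disjoint_left.mp hST hs
    simp [Finset.disjoint_right, htS, hsT]
  have hsub :
      S.offDiag ∪ T.offDiag ∪ {(s, t), (t, s)} ⊆ G.interedges (S ∪ T) (S ∪ T) := by
    refine union_subset (union_subset ?_ ?_) ?_
    · exact hS.offDiag_subset_interedges.trans
        (G.interedges_mono subset_union_left subset_union_left)
    · exact hT.offDiag_subset_interedges.trans
        (G.interedges_mono subset_union_right subset_union_right)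
    · simp [insert_subset_iff, G.mk_mem_interedges_iff, hs, ht, hst, hst.symm]
  calc #S.offDiag + #T.offDiag + 2 = #(S.offDiag ∪ T.offDiag ∪ {(s, t), (t, s)}) := by
        rw [card_union_of_disjoint hbridge, card_union_of_disjoint hdisj,
          card_pair (by simp [hst.ne])]
    _ ≤ _ := card_le_card hsub

variable [Fintype V]

theorem degree_le_card_sub_one {v : V} {s : Finset V} (hv : v ∈ s)
    (hs : ∀ w, G.Adj v w → w ∈ s) : G.degree v ≤ #s - 1 := by
  rw [← card_neighborFinset_eq_degree, ← card_erase_of_mem hv]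
  refine card_le_card fun w hw => mem_erase.mpr ?_
  rw [mem_neighborFinset] at hw
  exact ⟨hw.ne', hs w hw⟩

variable (G)

theorem le_maxDegree_of_isRoot_charpoly_adjMatrix {mu : ℝ}
    (h : (G.adjMatrix ℝ).charpoly.IsRoot mu) : mu ≤ G.maxDegree := by
  have hmu : Module.End.HasEigenvalue (toLin' (G.adjMatrix ℝ)) mu := by
    rwa [Module.End.hasEigenvalue_iff_isRoot_charpoly, Matrix.charpoly_toLin']
  obtain ⟨k, hk⟩ := eigenvalue_mem_ball hmu
  have hrow : ∑ j ∈ univ.erase k, ‖G.adjMatrix ℝ k j‖ = G.degree k := by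
    rw [sum_erase _ (by simp), ← card_neighborFinset_eq_degree, neighborFinset_eq_filter]
    simp [adjMatrix_apply, apply_ite, sum_boole]
  rw [Metric.mem_closedBall, hrow, adjMatrix_apply, if_neg G.irrefl, Real.dist_eq,
    sub_zero] at hk
  calc mu ≤ |mu| := le_abs_self mu
    _ ≤ G.degree k := hk
    _ ≤ G.maxDegree := by exact_mod_cast G.degree_le_maxDegree k

theorem indicator_dotProduct_adjMatrix_mulVec_indicator {α : Type*} [NonAssocSemiring α]
    (U : Finset V) :
    (U : Set V).indicator 1 ⬝ᵥ (G.adjMatrix α *ᵥ (U : Set V).indicator 1) =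
      (#(G.interedges U U) : α) := by
  simp only [dotProduct, mulVec, Set.indicator_apply, interedges_def, card_filter, sum_product]
  push_cast
  simp [Finset.sum_ite_mem, adjMatrix_apply, ite_mul, mul_ite]

theorem card_interedges_le_mul_card {r : ℝ}
    (hr : ∀ mu, (G.adjMatrix ℝ).charpoly.IsRoot mu → mu ≤ r) (U : Finset V) :
    (#(G.interedges U U) : ℝ) ≤ r * #U := by
  have := (G.isHermitian_adjMatrix ℝ).dotProduct_mulVec_le_of_isRoot_le hr
    ((U : Set V).indicator 1)
  have hnorm : (U : Set V).indicator 1 ⬝ᵥ (U : Set V).indicator 1 = (#U : ℝ) := by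
    simp [dotProduct, Set.indicator_apply]
  rwa [indicator_dotProduct_adjMatrix_mulVec_indicator, hnorm] at this

variable {G}

theorem IsClique.card_sub_one_le {r : ℝ}
    (hr : ∀ mu, (G.adjMatrix ℝ).charpoly.IsRoot mu → mu ≤ r) {S : Finset V}
    (hS : G.IsClique (S : Set V)) (hne : S.Nonempty) : (#S : ℝ) - 1 ≤ r := by
  have := (Nat.cast_le.mpr (card_le_card hS.offDiag_subset_interedges)).trans
    (G.card_interedges_le_mul_card hr S)
  rw [Finset.cast_card_offDiag, mul_comm] at this
  exact le_of_mul_le_mul_right this (by exact_mod_cast hne.card_pos)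

theorem le_mul_card_add_card_of_isClique_of_adj {r : ℝ}
    (hr : ∀ mu, (G.adjMatrix ℝ).charpoly.IsRoot mu → mu ≤ r) {S T : Finset V}
    (hST : Disjoint S T) (hS : G.IsClique (S : Set V)) (hT : G.IsClique (T : Set V))
    {s t : V} (hs : s ∈ S) (ht : t ∈ T) (hst : G.Adj s t) :
    (#S : ℝ) * (#S - 1) + #T * (#T - 1) + 2 ≤ r * (#S + #T) := by
  have hcount := (Nat.cast_le (α := ℝ)).mpr
    (card_offDiag_add_card_offDiag_add_two_le_card_interedges hST hS hT hs ht hst)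
  have hspec := G.card_interedges_le_mul_card hr (S ∪ T)
  rw [card_union_of_disjoint hST] at hspec
  push_cast [Finset.cast_card_offDiag] at hcount hspec
  linarith

end SimpleGraph

theorem Fin.card_filter_le_val {N k : ℕ} : #{j : Fin N | k ≤ (j : ℕ)} = N - k := by
  have := card_filter_add_card_filter_not (s := univ) (fun j : Fin N => (j : ℕ) < k)
  simp only [not_lt, card_univ, Fintype.card_fin, Fin.card_filter_val_lt] at this
  omega

namespace bridgeGraph

variable {m n : ℕ}

theorem adj_iff {i j : Fin (m + n)} :
    (bridgeGraph m n).Adj i j ↔ (i : ℕ) ≠ j ∧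
      ((i < m ∧ j < m) ∨ (m ≤ i ∧ m ≤ j) ∨
        (i + 1 = m ∧ j = m) ∨ (j + 1 = m ∧ i = m)) := by
  simp only [bridgeGraph, SimpleGraph.fromRel_adj, ne_eq, Fin.val_inj]
  tauto

variable (m n) in
def leftBlock : Finset (Fin (m + n)) := {i | (i : ℕ) < m}

variable (m n) in
def rightBlock : Finset (Fin (m + n)) := {i | m ≤ (i : ℕ)}

@[simp] theorem mem_leftBlock {i : Fin (m + n)} : i ∈ leftBlock m n ↔ (i : ℕ) < m := by
  simp [leftBlock]

@[simp] theorem mem_rightBlock {i : Fin (m + n)} : i ∈ rightBlock m n ↔ m ≤ (i : ℕ) := by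
  simp [rightBlock]

theorem card_leftBlock : #(leftBlock m n) = m := by
  rw [leftBlock, Fin.card_filter_val_lt]
  omega

theorem card_rightBlock : #(rightBlock m n) = n := by
  rw [rightBlock, Fin.card_filter_le_val]
  omega

theorem disjoint_leftBlock_rightBlock : Disjoint (leftBlock m n) (rightBlock m n) :=
  Finset.disjoint_left.mpr fun _ hl hr => (mem_rightBlock.mp hr).not_gt (mem_leftBlock.mp hl)

theorem isClique_leftBlock : (bridgeGraph m n).IsClique (leftBlock m n : Set (Fin (m + n))) :=
  fun _ hi _ hj hij =>
    adj_iff.mpr ⟨Fin.val_ne_of_ne hij, Or.inl ⟨mem_leftBlock.mp hi, mem_leftBlock.mp hj⟩⟩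

theorem isClique_rightBlock : (bridgeGraph m n).IsClique (rightBlock m n : Set (Fin (m + n))) :=
  fun _ hi _ hj hij =>
    adj_iff.mpr ⟨Fin.val_ne_of_ne hij,
      Or.inr (Or.inl ⟨mem_rightBlock.mp hi, mem_rightBlock.mp hj⟩)⟩

theorem degree_le (i : Fin (m + n)) : (bridgeGraph m n).degree i ≤ max m n := by
  by_cases hi : (i : ℕ) < m
  · have := degree_le_card_sub_one (G := bridgeGraph m n) (v := i)
      (s := ({j | (j : ℕ) < m + 1} : Finset (Fin (m + n))))
      (by simp only [mem_filter, mem_univ, true_and]; omega)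
      fun j hj => by simp only [adj_iff, mem_filter, mem_univ, true_and] at hj ⊢; omega
    rw [Fin.card_filter_val_lt] at this
    omega
  · have := degree_le_card_sub_one (G := bridgeGraph m n) (v := i)
      (s := ({j | m - 1 ≤ (j : ℕ)} : Finset (Fin (m + n))))
      (by simp only [mem_filter, mem_univ, true_and]; omega)
      fun j hj => by simp only [adj_iff, mem_filter, mem_univ, true_and] at hj ⊢; omega
    rw [Fin.card_filter_le_val] at this
    omega

end bridgeGraph

/-- For all integers `m ≥ n ≥ 2`, the largest eigenvalue `λ₁` of the
adjacency matrix `A(B_{m,n})` (i.e. the largest root of its characteristic polynomial;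
all eigenvalues are real since the matrix is symmetric) satisfies `m − 1 ≤ λ₁ ≤ m`;
if moreover `m = n`, then `m − (1 − 1/m) ≤ λ₁ ≤ m`. -/
theorem largest_eigenvalue_bridgeGraph_bounds (m n : ℕ) (hn : 2 ≤ n) (hnm : n ≤ m) :
    ∃ lam : ℝ, ((bridgeGraph m n).adjMatrix ℝ).charpoly.IsRoot lam ∧
      (∀ mu : ℝ, ((bridgeGraph m n).adjMatrix ℝ).charpoly.IsRoot mu → mu ≤ lam) ∧
      (m : ℝ) - 1 ≤ lam ∧ lam ≤ (m : ℝ) ∧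
      (m = n → (m : ℝ) - (1 - 1 / (m : ℝ)) ≤ lam) := by
  have : Nonempty (Fin (m + n)) := ⟨⟨0, by omega⟩⟩
  obtain ⟨lam, hroot, hmax⟩ :=
    (isHermitian_adjMatrix ℝ (bridgeGraph m n)).exists_isGreatest_isRoot_charpoly
  have hlow : (m : ℝ) - 1 ≤ lam := by
    simpa [bridgeGraph.card_leftBlock] using
      bridgeGraph.isClique_leftBlock.card_sub_one_le hmax
        ⟨⟨0, by omega⟩, bridgeGraph.mem_leftBlock.mpr (show 0 < m by omega)⟩
  refine ⟨lam, hroot, hmax, hlow, ?_, ?_⟩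
  · calc lam ≤ (bridgeGraph m n).maxDegree := le_maxDegree_of_isRoot_charpoly_adjMatrix _ hroot
      _ ≤ m := by
        exact_mod_cast (maxDegree_le_of_forall_degree_le _ _ bridgeGraph.degree_le).trans
          (max_eq_left hnm).le
  · rintro rfl
    have := le_mul_card_add_card_of_isClique_of_adj hmax
      bridgeGraph.disjoint_leftBlock_rightBlock bridgeGraph.isClique_leftBlock
      bridgeGraph.isClique_rightBlock (s := ⟨m - 1, by omega⟩) (t := ⟨m, by omega⟩)
      (bridgeGraph.mem_leftBlock.mpr (show m - 1 < m by omega))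
      (bridgeGraph.mem_rightBlock.mpr le_rfl) (by simp only [bridgeGraph.adj_iff, and_true]; omega)
    rw [bridgeGraph.card_leftBlock, bridgeGraph.card_rightBlock] at this
    have hrw : (m : ℝ) - (1 - 1 / m) = (m * (m - 1) + m * (m - 1) + 2) / (m + m) := by
      field_simp
      ring
    rw [hrw, div_le_iff₀ (by positivity)]
    linarith
end

section
/- For every integer m > 2, the cubic polynomial x³ + (3−m)x² + (2−2m)x − 2 has three real roots θ₁ ≥ θ₂ ≥ θ₃, and its two smallest roots satisfy −3 ≤ θ₂ + θ₃ ≤ −2 and 2/m ≤ θ₂·θ₃ ≤ 2/(m−1). -/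
/-!
The cubic `f(x) = x³ + (3 - m)x² + (2 - 2m)x - 2` takes the values `f(-2) = -2`, `f(-1) = m - 2`,
`f(0) = -2`, `f(m - 1) = -2` and `f(m) = m² + 2m - 2`, so for `m > 2` it changes sign on each of
`(-2, -1)`, `(-1, 0)` and `(m - 1, m)` and hence has one root in each. By Vieta the two small roots
have sum `m - 3 - θ₁ ∈ (-3, -2)` and product `2 / θ₁ ∈ (2/m, 2/(m - 1))`.
-/

open Set

lemma vieta_of_distinct_roots {R : Type*} [CommRing R] [IsDomain R] {p q r a b c : R}
    (hab : a ≠ b) (hac : a ≠ c) (hbc : b ≠ c)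
    (ha : a ^ 3 + p * a ^ 2 + q * a + r = 0) (hb : b ^ 3 + p * b ^ 2 + q * b + r = 0)
    (hc : c ^ 3 + p * c ^ 2 + q * c + r = 0) :
    a + b + c = -p ∧ a * b + a * c + b * c = q ∧ a * b * c = -r := by
  -- first and second divided differences of the cubic vanish at distinct roots
  have hab' : a ^ 2 + a * b + b ^ 2 + p * (a + b) + q = 0 := by
    refine (mul_eq_zero.mp ?_).resolve_left (sub_ne_zero.mpr hab)
    linear_combination ha - hb
  have hac' : a ^ 2 + a * c + c ^ 2 + p * (a + c) + q = 0 := by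
    refine (mul_eq_zero.mp ?_).resolve_left (sub_ne_zero.mpr hac)
    linear_combination ha - hc
  have hsum : a + b + c = -p := by
    have h : (b - c) * (a + b + c + p) = 0 := by linear_combination hab' - hac'
    exact eq_neg_of_add_eq_zero_left ((mul_eq_zero.mp h).resolve_left (sub_ne_zero.mpr hbc))
  have hpair : a * b + a * c + b * c = q := by
    linear_combination (a + b) * hsum - hab'
  refine ⟨hsum, hpair, ?_⟩
  linear_combination ha - a ^ 2 * hsum + a * hpair

def bridgeCubic (M x : ℝ) : ℝ := x ^ 3 + (3 - M) * x ^ 2 + (2 - 2 * M) * x - 2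

namespace bridgeCubic

variable (M : ℝ)

lemma continuous : Continuous (bridgeCubic M) := by
  unfold bridgeCubic; fun_prop

lemma apply_neg_two : bridgeCubic M (-2) = -2 := by unfold bridgeCubic; ring

lemma apply_neg_one : bridgeCubic M (-1) = M - 2 := by unfold bridgeCubic; ring

lemma apply_zero : bridgeCubic M 0 = -2 := by unfold bridgeCubic; ring

lemma apply_sub_one : bridgeCubic M (M - 1) = -2 := by unfold bridgeCubic; ring

lemma apply_self : bridgeCubic M M = M ^ 2 + 2 * M - 2 := by unfold bridgeCubic; ring

variable {M}

lemma exists_roots (hM : 2 < M) :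
    ∃ θ₁ θ₂ θ₃ : ℝ, θ₁ ∈ Ioo (M - 1) M ∧ θ₂ ∈ Ioo (-1) 0 ∧ θ₃ ∈ Ioo (-2) (-1) ∧
      bridgeCubic M θ₁ = 0 ∧ bridgeCubic M θ₂ = 0 ∧ bridgeCubic M θ₃ = 0 := by
  obtain ⟨θ₁, hθ₁, h₁⟩ := intermediate_value_Ioo (by linarith : M - 1 ≤ M) (continuous M).continuousOn
    (show (0 : ℝ) ∈ Ioo _ _ by rw [apply_sub_one, apply_self]; constructor <;> nlinarith)
  obtain ⟨θ₂, hθ₂, h₂⟩ := intermediate_value_Ioo' (by norm_num : (-1 : ℝ) ≤ 0) (continuous M).continuousOn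
    (show (0 : ℝ) ∈ Ioo _ _ by rw [apply_zero, apply_neg_one]; constructor <;> linarith)
  obtain ⟨θ₃, hθ₃, h₃⟩ := intermediate_value_Ioo (by norm_num : (-2 : ℝ) ≤ -1) (continuous M).continuousOn
    (show (0 : ℝ) ∈ Ioo _ _ by rw [apply_neg_two, apply_neg_one]; constructor <;> linarith)
  exact ⟨θ₁, θ₂, θ₃, hθ₁, hθ₂, hθ₃, h₁, h₂, h₃⟩

lemma vieta {θ₁ θ₂ θ₃ : ℝ} (h₁₂ : θ₁ ≠ θ₂) (h₁₃ : θ₁ ≠ θ₃) (h₂₃ : θ₂ ≠ θ₃)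
    (h₁ : bridgeCubic M θ₁ = 0) (h₂ : bridgeCubic M θ₂ = 0) (h₃ : bridgeCubic M θ₃ = 0) :
    θ₁ + θ₂ + θ₃ = M - 3 ∧ θ₁ * θ₂ + θ₁ * θ₃ + θ₂ * θ₃ = 2 - 2 * M ∧ θ₁ * θ₂ * θ₃ = 2 := by
  unfold bridgeCubic at h₁ h₂ h₃
  obtain ⟨hs, hq, hr⟩ := vieta_of_distinct_roots (p := 3 - M) (q := 2 - 2 * M) (r := -2) h₁₂ h₁₃ h₂₃
    (by linear_combination h₁) (by linear_combination h₂) (by linear_combination h₃)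
  exact ⟨by linear_combination hs, hq, by linear_combination hr⟩

end bridgeCubic

/-- For every integer `m > 2`, the cubic polynomial
`x³ + (3−m)x² + (2−2m)x − 2` has three real roots `θ₁ ≥ θ₂ ≥ θ₃`, and its two smallest roots
satisfy `−3 ≤ θ₂ + θ₃ ≤ −2` and `2/m ≤ θ₂·θ₃ ≤ 2/(m−1)`. -/
theorem cubic_roots_bridgeGraph_bounds (m : ℕ) (hm : 2 < m) :
    ∃ θ₁ θ₂ θ₃ : ℝ, θ₂ ≤ θ₁ ∧ θ₃ ≤ θ₂ ∧
      (∀ x : ℝ, x ^ 3 + (3 - (m : ℝ)) * x ^ 2 + (2 - 2 * (m : ℝ)) * x - 2 =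
        (x - θ₁) * (x - θ₂) * (x - θ₃)) ∧
      -3 ≤ θ₂ + θ₃ ∧ θ₂ + θ₃ ≤ -2 ∧
      2 / (m : ℝ) ≤ θ₂ * θ₃ ∧ θ₂ * θ₃ ≤ 2 / ((m : ℝ) - 1) := by
  have hM : (2 : ℝ) < m := by exact_mod_cast hm
  obtain ⟨θ₁, θ₂, θ₃, ⟨h₁l, h₁r⟩, ⟨h₂l, h₂r⟩, ⟨h₃l, h₃r⟩, r₁, r₂, r₃⟩ :=
    bridgeCubic.exists_roots hM
  obtain ⟨hs, hq, hr⟩ := bridgeCubic.vieta (by linarith : θ₂ < θ₁).ne'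
    (by linarith : θ₃ < θ₁).ne' (by linarith : θ₃ < θ₂).ne' r₁ r₂ r₃
  have hθ₁ : 0 < θ₁ := by linarith
  have hprod : θ₂ * θ₃ = 2 / θ₁ := by
    rw [eq_div_iff hθ₁.ne']; linear_combination hr
  refine ⟨θ₁, θ₂, θ₃, by linarith, by linarith, fun x => ?_, by linarith, by linarith, ?_, ?_⟩
  · linear_combination x ^ 2 * hs - x * hq + hr
  · rw [hprod]; exact div_le_div_of_nonneg_left zero_le_two hθ₁ h₁r.le
  · rw [hprod]; exact div_le_div_of_nonneg_left zero_le_two (by linarith) h₁l.le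
end

section
/- For every integer n ≥ 0, the cubic polynomial x³ − (n+1)x² − (n+3)x + (3n+2) has three real roots θ₁ ≥ θ₂ ≥ θ₃, and its second and third largest roots satisfy −1 ≤ θ₂ + θ₃ ≤ −(n+1)/(n+3) and −(2+3n)(n+3)/((n+1)(n+4)) ≤ θ₂·θ₃ ≤ −(2+3n)/(n+2). -/
/-!
Let `θ₁` be the largest root and `a = (n+1)(n+4)/(n+3)`. By Vieta, `θ₂ + θ₃ = n + 1 - θ₁` and
`θ₂ θ₃ = -(3n+2)/θ₁`, so all four bounds say exactly that `a ≤ θ₁ ≤ n + 2`. The cubic is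
negative at `a` and equals `2n ≥ 0` at `n + 2`, so the intermediate value theorem puts a root
there; two more sign changes on `[-3, -1]` and `[0, a]` give the other two roots.
-/

open Set

theorem cubic_vieta_of_three_roots {K : Type*} [CommRing K] [IsDomain K] {b c d r₁ r₂ r₃ : K}
    (h₁₂ : r₁ ≠ r₂) (h₁₃ : r₁ ≠ r₃) (h₂₃ : r₂ ≠ r₃)
    (hr₁ : r₁ ^ 3 + b * r₁ ^ 2 + c * r₁ + d = 0) (hr₂ : r₂ ^ 3 + b * r₂ ^ 2 + c * r₂ + d = 0)
    (hr₃ : r₃ ^ 3 + b * r₃ ^ 2 + c * r₃ + d = 0) :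
    b = -(r₁ + r₂ + r₃) ∧ c = r₁ * r₂ + r₁ * r₃ + r₂ * r₃ ∧ d = -(r₁ * r₂ * r₃) := by
  have e₁₂ : r₁ ^ 2 + r₁ * r₂ + r₂ ^ 2 + b * (r₁ + r₂) + c = 0 := by
    refine (mul_eq_zero.mp ?_).resolve_left (sub_ne_zero.mpr h₁₂)
    linear_combination hr₁ - hr₂
  have e₁₃ : r₁ ^ 2 + r₁ * r₃ + r₃ ^ 2 + b * (r₁ + r₃) + c = 0 := by
    refine (mul_eq_zero.mp ?_).resolve_left (sub_ne_zero.mpr h₁₃)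
    linear_combination hr₁ - hr₃
  have hb : b = -(r₁ + r₂ + r₃) := by
    have h : (r₂ - r₃) * (r₁ + r₂ + r₃ + b) = 0 := by linear_combination e₁₂ - e₁₃
    linear_combination (mul_eq_zero.mp h).resolve_left (sub_ne_zero.mpr h₂₃)
  have hc : c = r₁ * r₂ + r₁ * r₃ + r₂ * r₃ := by linear_combination e₁₂ - (r₁ + r₂) * hb
  exact ⟨hb, hc, by linear_combination hr₁ - r₁ ^ 2 * hb - r₁ * hc⟩

def tildeRCubic (n x : ℝ) : ℝ := x ^ 3 - (n + 1) * x ^ 2 - (n + 3) * x + (3 * n + 2)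

theorem continuous_tildeRCubic (n : ℝ) : Continuous (tildeRCubic n) := by
  unfold tildeRCubic; fun_prop

theorem tildeRCubic_lowerBound_neg {n : ℝ} (hn : 0 ≤ n) :
    tildeRCubic n ((n + 1) * (n + 4) / (n + 3)) < 0 := by
  have h : tildeRCubic n ((n + 1) * (n + 4) / (n + 3)) =
      -(4 * n ^ 3 + 26 * n ^ 2 + 52 * n + 38) / (n + 3) ^ 3 := by
    unfold tildeRCubic; field_simp; ring
  rw [h]
  exact div_neg_of_neg_of_pos (neg_neg_of_pos (by positivity)) (by positivity)

theorem exists_roots_tildeRCubic {n : ℝ} (hn : 0 ≤ n) :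
    ∃ θ₁ θ₂ θ₃ : ℝ, θ₃ < θ₂ ∧ θ₂ < θ₁ ∧ (n + 1) * (n + 4) / (n + 3) ≤ θ₁ ∧ θ₁ ≤ n + 2 ∧
      tildeRCubic n θ₁ = 0 ∧ tildeRCubic n θ₂ = 0 ∧ tildeRCubic n θ₃ = 0 := by
  set a := (n + 1) * (n + 4) / (n + 3) with ha
  have hpa : tildeRCubic n a < 0 := tildeRCubic_lowerBound_neg hn
  have h0a : 0 ≤ a := by positivity
  have han : a ≤ n + 2 := by rw [ha, div_le_iff₀ (by positivity)]; nlinarith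
  have hp {s : Set ℝ} : ContinuousOn (tildeRCubic n) s := (continuous_tildeRCubic n).continuousOn
  obtain ⟨θ₃, ⟨-, hθ₃⟩, hr₃⟩ := intermediate_value_Icc (by norm_num : (-3 : ℝ) ≤ -1) hp
    (show (0 : ℝ) ∈ Icc _ _ from ⟨by unfold tildeRCubic; linarith, by unfold tildeRCubic; linarith⟩)
  obtain ⟨θ₂, ⟨hθ₂, hθ₂a⟩, hr₂⟩ := intermediate_value_Icc' h0a hp
    (show (0 : ℝ) ∈ Icc _ _ from ⟨hpa.le, by unfold tildeRCubic; linarith⟩)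
  obtain ⟨θ₁, ⟨haθ₁, hθ₁⟩, hr₁⟩ := intermediate_value_Icc han hp
    (show (0 : ℝ) ∈ Icc _ _ from ⟨hpa.le, by unfold tildeRCubic; nlinarith⟩)
  have hθ₂a' : θ₂ < a := hθ₂a.lt_of_ne (by rintro rfl; linarith)
  exact ⟨θ₁, θ₂, θ₃, by linarith, by linarith, haθ₁, hθ₁, hr₁, hr₂, hr₃⟩

section RootBounds

variable {n t : ℝ} (hn : 0 ≤ n) (hlow : (n + 1) * (n + 4) / (n + 3) ≤ t) (hup : t ≤ n + 2)
include hn hlow hup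

theorem tildeR_sum_bounds : -1 ≤ n + 1 - t ∧ n + 1 - t ≤ -((n + 1) / (n + 3)) := by
  have ha : (n + 1) * (n + 4) / (n + 3) = n + 1 + (n + 1) / (n + 3) := by field_simp; ring
  constructor <;> linarith

theorem tildeR_prod_bounds :
    -((2 + 3 * n) * (n + 3) / ((n + 1) * (n + 4))) ≤ -(2 + 3 * n) / t ∧
      -(2 + 3 * n) / t ≤ -((2 + 3 * n) / (n + 2)) := by
  have ha : (2 + 3 * n) * (n + 3) / ((n + 1) * (n + 4)) =
      (2 + 3 * n) / ((n + 1) * (n + 4) / (n + 3)) := by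
    field_simp
  have ht : 0 < t := lt_of_lt_of_le (by positivity) hlow
  rw [ha, neg_div, neg_le_neg_iff, neg_le_neg_iff]
  exact ⟨div_le_div_of_nonneg_left (by positivity) (by positivity) hlow,
    div_le_div_of_nonneg_left (by positivity) ht hup⟩

end RootBounds

/-- For every integer `n ≥ 0`, the cubic polynomial
`x³ − (n+1)x² − (n+3)x + (3n+2)` has three real roots `θ₁ ≥ θ₂ ≥ θ₃`, and its second and
third largest roots satisfy `−1 ≤ θ₂ + θ₃ ≤ −(n+1)/(n+3)` and
`−(2+3n)(n+3)/((n+1)(n+4)) ≤ θ₂·θ₃ ≤ −(2+3n)/(n+2)`. -/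
theorem cubic_roots_tildeR_bounds (n : ℕ) :
    ∃ θ₁ θ₂ θ₃ : ℝ, θ₂ ≤ θ₁ ∧ θ₃ ≤ θ₂ ∧
      (∀ x : ℝ, x ^ 3 - ((n : ℝ) + 1) * x ^ 2 - ((n : ℝ) + 3) * x + (3 * (n : ℝ) + 2) =
        (x - θ₁) * (x - θ₂) * (x - θ₃)) ∧
      -1 ≤ θ₂ + θ₃ ∧ θ₂ + θ₃ ≤ -(((n : ℝ) + 1) / ((n : ℝ) + 3)) ∧
      -((2 + 3 * (n : ℝ)) * ((n : ℝ) + 3) / (((n : ℝ) + 1) * ((n : ℝ) + 4))) ≤ θ₂ * θ₃ ∧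
      θ₂ * θ₃ ≤ -((2 + 3 * (n : ℝ)) / ((n : ℝ) + 2)) := by
  have hn : (0 : ℝ) ≤ n := n.cast_nonneg
  obtain ⟨θ₁, θ₂, θ₃, h₃₂, h₂₁, hlow, hup, hr₁, hr₂, hr₃⟩ := exists_roots_tildeRCubic hn
  have hroot {θ : ℝ} (h : tildeRCubic n θ = 0) :
      θ ^ 3 + -((n : ℝ) + 1) * θ ^ 2 + -((n : ℝ) + 3) * θ + (3 * n + 2) = 0 := by
    rw [← h, tildeRCubic]; ring
  obtain ⟨hb, hc, hd⟩ := cubic_vieta_of_three_roots h₂₁.ne' (h₃₂.trans h₂₁).ne' h₃₂.ne'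
    (hroot hr₁) (hroot hr₂) (hroot hr₃)
  have hsum : θ₂ + θ₃ = n + 1 - θ₁ := by linear_combination hb
  have hprod : θ₂ * θ₃ = -(2 + 3 * n) / θ₁ := by
    rw [eq_div_iff (lt_of_lt_of_le (by positivity) hlow).ne']; linear_combination hd
  refine ⟨θ₁, θ₂, θ₃, h₂₁.le, h₃₂.le, fun x => by linear_combination x ^ 2 * hb + x * hc + hd, ?_⟩
  rw [hsum, hprod]
  exact ⟨(tildeR_sum_bounds hn hlow hup).1, (tildeR_sum_bounds hn hlow hup).2,
    tildeR_prod_bounds hn hlow hup⟩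
end
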